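/- Let f be an even integrable symbol on the unit circle with Fourier coefficients f_j. Then det(f_{j−k} − f_{j+k+2})_{j,k=0}^{n−1} = (2^{n²}/π^n) D_n^H(f(e^{iθ(x)}) √(1−x²)), where D_n^H(w) = det(∫_{−1}^1 x^{j+k} w(x) dx)_{j,k=0}^{n−1} and x = cos θ. -/

import Mathlib

/-!
Evenness and `2π`-periodicity of `g` give `f_m = (1/π) ∫₀^π g(θ) cos(mθ) dθ`, and
`cos((j-k)θ) - cos((j+k+2)θ) = 2 sin((j+1)θ) sin((k+1)θ)`. Substituting `x = cos θ` and using
`U_j(cos θ) sin θ = sin((j+1)θ)` turns the Toeplitz+Hankel matrix into `2/π` times the Gram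
matrix of the Chebyshev polynomials `U_0, …, U_{n-1}` for the weight `g(arccos x) √(1-x²)` on
`[-1,1]`. That Gram matrix is `L H Lᵀ`, with `H` the Hankel moment matrix and `L` the
lower-triangular coefficient matrix of the `U_j`, whose diagonal `2^j` gives
`det L ^ 2 = 2^{n(n-1)}`; and `2^n ⋅ 2^{n(n-1)} = 2^{n²}`.
-/

open MeasureTheory

open scoped Real

/-- Fourier coefficient of a symbol `g(θ)` (standing for `g(e^{iθ})`). -/
noncomputable def circleCoeff (g : ℝ → ℂ) (j : ℤ) : ℂ :=
  (1 / (2 * (π : ℂ))) *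
    ∫ θ in (0:ℝ)..(2 * π), g θ * Complex.exp (-(j * θ) * Complex.I)

/-- Hankel determinant of a weight `w` on `[-1,1]`. -/
noncomputable def hankelDet (w : ℝ → ℂ) (n : ℕ) : ℂ :=
  Matrix.det (Matrix.of fun j k : Fin n =>
    ∫ x in (-1:ℝ)..1, (x : ℂ)^((j : ℕ) + (k : ℕ)) * w x)

open Polynomial Polynomial.Chebyshev
open scoped Matrix

theorem intervalIntegral.integral_zero_two_mul_eq_integral_add_reflect {E : Type*}
    [NormedAddCommGroup E] [NormedSpace ℝ E] {h : ℝ → E} {a : ℝ}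
    (hh : IntervalIntegrable h volume 0 (2 * a)) :
    ∫ x in 0..2 * a, h x = ∫ x in 0..a, (h x + h (2 * a - x)) := by
  have ha : a ∈ Set.uIcc 0 (2 * a) := by
    rcases le_total 0 a with ha | ha
    · exact Set.mem_uIcc.mpr (Or.inl ⟨ha, by linarith⟩)
    · exact Set.mem_uIcc.mpr (Or.inr ⟨by linarith, ha⟩)
  have hfirst : IntervalIntegrable h volume 0 a :=
    hh.mono_set (Set.uIcc_subset_uIcc Set.left_mem_uIcc ha)
  have hsecond : IntervalIntegrable h volume a (2 * a) :=
    hh.mono_set (Set.uIcc_subset_uIcc ha Set.right_mem_uIcc)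
  have hreflect : ∫ x in 0..a, h (2 * a - x) = ∫ x in a..2 * a, h x := by
    rw [intervalIntegral.integral_comp_sub_left]; ring_nf
  have hsecond_reflect : IntervalIntegrable (fun x => h (2 * a - x)) volume 0 a := by
    simpa [two_mul] using (hsecond.comp_sub_left (2 * a)).symm
  rw [intervalIntegral.integral_add hfirst hsecond_reflect, hreflect,
    intervalIntegral.integral_add_adjacent_intervals hfirst hsecond]

theorem circleCoeff_eq_integral_cos {g : ℝ → ℂ} (hint : IntervalIntegrable g volume 0 (2 * π))
    (heven : ∀ θ, g (-θ) = g θ) (hper : Function.Periodic g (2 * π)) (m : ℤ) :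
    circleCoeff g m = (1 / π) * ∫ θ in 0..π, g θ * Complex.cos (m * θ) := by
  have hreflect (θ : ℝ) :
      g (2 * π - θ) * Complex.exp (-(m * ((2 * π - θ : ℝ) : ℂ)) * Complex.I)
        = g θ * Complex.exp (m * θ * Complex.I) := by
    rw [sub_eq_neg_add, hper, heven, show -(m * ((-θ + 2 * π : ℝ) : ℂ)) * Complex.I
      = m * θ * Complex.I + (-m : ℤ) * (2 * π * Complex.I) by push_cast; ring,
      Complex.exp_add, Complex.exp_int_mul_two_pi_mul_I, mul_one]
  rw [circleCoeff, intervalIntegral.integral_zero_two_mul_eq_integral_add_reflect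
    (hint.mul_continuousOn (by fun_prop)), ← intervalIntegral.integral_const_mul,
    ← intervalIntegral.integral_const_mul]
  refine intervalIntegral.integral_congr fun θ _ => ?_
  simp only [hreflect, Complex.cos]
  have hpi : (π : ℂ) ≠ 0 := Complex.ofReal_ne_zero.mpr Real.pi_ne_zero
  field_simp
  ring_nf

theorem circleCoeff_sub_circleCoeff_eq_integral_sin_mul_sin {g : ℝ → ℂ}
    (hint : IntervalIntegrable g volume 0 (2 * π)) (heven : ∀ θ, g (-θ) = g θ)
    (hper : Function.Periodic g (2 * π)) (j k : ℤ) :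
    circleCoeff g (j - k) - circleCoeff g (j + k + 2)
      = (2 / π) *
          ∫ θ in 0..π, g θ * (Complex.sin ((j + 1) * θ) * Complex.sin ((k + 1) * θ)) := by
  have hg : IntervalIntegrable g volume 0 π := hint.mono_set
    (Set.uIcc_subset_uIcc Set.left_mem_uIcc
      (Set.mem_uIcc.mpr (Or.inl ⟨Real.pi_nonneg, by linarith [Real.pi_pos]⟩)))
  rw [circleCoeff_eq_integral_cos hint heven hper, circleCoeff_eq_integral_cos hint heven hper,
    ← mul_sub, ← intervalIntegral.integral_sub (hg.mul_continuousOn (by fun_prop))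
      (hg.mul_continuousOn (by fun_prop)), ← intervalIntegral.integral_const_mul,
    ← intervalIntegral.integral_const_mul]
  refine intervalIntegral.integral_congr fun θ _ => ?_
  rw [← mul_sub, Complex.cos_sub_cos,
    show (((j - k : ℤ) : ℂ) * θ + ((j + k + 2 : ℤ) : ℂ) * θ) / 2 = (j + 1) * θ by push_cast; ring,
    show (((j - k : ℤ) : ℂ) * θ - ((j + k + 2 : ℤ) : ℂ) * θ) / 2 = -((k + 1) * θ) by
      push_cast; ring,
    Complex.sin_neg]
  ring

theorem integral_neg_one_one_eq_integral_sin_mul_comp_cos (F : ℝ → ℂ) :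
    ∫ x in -1..1, F x = ∫ θ in 0..π, Real.sin θ * F (Real.cos θ) := by
  rw [intervalIntegral.integral_of_le (by norm_num),
    intervalIntegral.integral_of_le Real.pi_nonneg, ← integral_Icc_eq_integral_Ioc,
    ← integral_Icc_eq_integral_Ioc, ← Real.bijOn_cos.image_eq,
    integral_image_eq_integral_abs_deriv_smul measurableSet_Icc
      (fun θ _ => (Real.hasDerivAt_cos θ).hasDerivWithinAt) Real.injOn_cos]
  refine setIntegral_congr_fun measurableSet_Icc fun θ hθ => ?_
  rw [abs_neg, abs_of_nonneg (Real.sin_nonneg_of_nonneg_of_le_pi hθ.1 hθ.2), Complex.real_smul]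

theorem integral_sin_mul_sin_eq_integral_U_mul_U (G : ℝ → ℂ) (j k : ℤ) :
    ∫ θ in 0..π, G θ * (Complex.sin ((j + 1) * θ) * Complex.sin ((k + 1) * θ))
      = ∫ x in -1..1, (U ℂ j).eval (x : ℂ) * (U ℂ k).eval (x : ℂ)
          * (G (Real.arccos x) * (Real.sqrt (1 - x ^ 2) : ℂ)) := by
  rw [integral_neg_one_one_eq_integral_sin_mul_comp_cos]
  refine intervalIntegral.integral_congr fun θ hθ => ?_
  rw [Set.uIcc_of_le Real.pi_nonneg] at hθ
  rw [Real.arccos_cos hθ.1 hθ.2, ← Real.sin_eq_sqrt_one_sub_cos_sq hθ.1 hθ.2,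
    Complex.ofReal_cos, Complex.ofReal_sin]
  linear_combination
    (-(U ℂ k).eval (Complex.cos θ) * Complex.sin θ * G θ) * U_complex_cos (θ : ℂ) j
      - Complex.sin ((j + 1) * θ) * G θ * U_complex_cos (θ : ℂ) k

def polyCoeffMatrix {R ι : Type*} [Semiring R] (p : ι → R[X]) (n : ℕ) : Matrix ι (Fin n) R :=
  Matrix.of fun i k => (p i).coeff k

noncomputable def momentMatrix (a b : ℝ) (w : ℝ → ℂ) (n : ℕ) : Matrix (Fin n) (Fin n) ℂ :=
  Matrix.of fun j k => ∫ x in a..b, (x : ℂ) ^ ((j : ℕ) + (k : ℕ)) * w x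

theorem hankelDet_eq_det_momentMatrix (w : ℝ → ℂ) (n : ℕ) :
    hankelDet w n = (momentMatrix (-1) 1 w n).det := rfl

theorem gram_eq_polyCoeffMatrix_mul_momentMatrix_mul_transpose {ι : Type*} {n : ℕ}
    (p : ι → ℂ[X]) (hp : ∀ i, (p i).natDegree < n) {a b : ℝ} {w : ℝ → ℂ}
    (hw : ∀ m : ℕ, IntervalIntegrable (fun x : ℝ => (x : ℂ) ^ m * w x) volume a b) :
    (Matrix.of fun i i' => ∫ x in a..b, (p i).eval (x : ℂ) * (p i').eval (x : ℂ) * w x)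
      = polyCoeffMatrix p n * momentMatrix a b w n * (polyCoeffMatrix p n)ᵀ := by
  ext i i'
  have hexpand (x : ℝ) : (p i).eval (x : ℂ) * (p i').eval (x : ℂ) * w x
      = ∑ l : Fin n, ∑ k : Fin n,
          (p i).coeff k * (p i').coeff l * ((x : ℂ) ^ ((k : ℕ) + (l : ℕ)) * w x) := by
    rw [eval_eq_sum_range' (hp i), eval_eq_sum_range' (hp i'), ← Fin.sum_univ_eq_sum_range,
      ← Fin.sum_univ_eq_sum_range, Finset.sum_mul_sum, Finset.sum_comm, Finset.sum_mul]
    refine Finset.sum_congr rfl fun l _ => ?_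
    rw [Finset.sum_mul]
    refine Finset.sum_congr rfl fun k _ => ?_
    ring
  simp only [Matrix.of_apply, Matrix.mul_apply, Matrix.transpose_apply, polyCoeffMatrix,
    momentMatrix, hexpand, Finset.sum_mul]
  have hterm (k l : Fin n) : IntervalIntegrable
      (fun x : ℝ => (p i).coeff k * (p i').coeff l * ((x : ℂ) ^ ((k : ℕ) + (l : ℕ)) * w x))
      volume a b := (hw _).const_mul _
  rw [intervalIntegral.integral_finsetSum fun l _ => by
    simpa only [Finset.sum_fn] using IntervalIntegrable.sum Finset.univ fun k _ => hterm k l]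
  refine Finset.sum_congr rfl fun l _ => ?_
  rw [intervalIntegral.integral_finsetSum fun k _ => hterm k l]
  refine Finset.sum_congr rfl fun k _ => ?_
  rw [intervalIntegral.integral_const_mul]
  ring

theorem det_polyCoeffMatrix_U (n : ℕ) :
    (polyCoeffMatrix (fun j : Fin n => U ℂ j) n).det = ∏ j ∈ Finset.range n, (2 : ℂ) ^ j := by
  rw [Matrix.det_of_isLowerTriangular _ fun j k hjk => by
    exact coeff_eq_zero_of_natDegree_lt (by simpa using hjk), ← Fin.prod_univ_eq_prod_range]
  refine Finset.prod_congr rfl fun j _ => ?_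
  rw [polyCoeffMatrix, Matrix.of_apply, ← leadingCoeff_U_natCast ℂ j, leadingCoeff,
    natDegree_U_natCast]

theorem pow_mul_prod_range_pow_sq {M : Type*} [CommMonoid M] (c : M) (n : ℕ) :
    c ^ n * (∏ j ∈ Finset.range n, c ^ j) ^ 2 = c ^ (n ^ 2) := by
  rw [Finset.prod_pow_eq_pow_sum, ← pow_mul, ← pow_add, Finset.sum_range_id_mul_two]
  rcases n with _ | m
  · rfl
  · rw [Nat.add_sub_cancel]
    ring_nf

/-- Toeplitz+Hankel identity:
`det(f_{j-k} - f_{j+k+2}) = (2^{n²}/πⁿ) D_n^H(f(e^{iθ(x)})√(1-x²))`. -/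
theorem toeplitz_plus_hankel_type2 (g : ℝ → ℂ)
    (hint : IntervalIntegrable g MeasureTheory.volume 0 (2 * π))
    (heven : ∀ θ, g (-θ) = g θ) (hper : Function.Periodic g (2 * π))
    (hmom : ∀ m : ℕ, IntervalIntegrable
      (fun x : ℝ => (x : ℂ)^m * (g (Real.arccos x) * (Real.sqrt (1 - x^2) : ℂ)))
      MeasureTheory.volume (-1) 1)
    (n : ℕ) :
    Matrix.det (Matrix.of fun j k : Fin n =>
        circleCoeff g ((j : ℤ) - (k : ℤ)) - circleCoeff g ((j : ℤ) + (k : ℤ) + 2))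
      = ((2 : ℂ)^((n : ℤ)^2) / (π : ℂ)^n) *
          hankelDet (fun x => g (Real.arccos x) * (Real.sqrt (1 - x^2) : ℂ)) n := by
  set w : ℝ → ℂ := fun x => g (Real.arccos x) * (Real.sqrt (1 - x ^ 2) : ℂ)
  have hentries : (Matrix.of fun j k : Fin n =>
        circleCoeff g ((j : ℤ) - (k : ℤ)) - circleCoeff g ((j : ℤ) + (k : ℤ) + 2))
      = (2 / π : ℂ) • Matrix.of fun j k : Fin n =>
          ∫ x in -1..1, (U ℂ j).eval (x : ℂ) * (U ℂ k).eval (x : ℂ) * w x := by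
    ext j k
    rw [Matrix.smul_apply, Matrix.of_apply, Matrix.of_apply, smul_eq_mul,
      circleCoeff_sub_circleCoeff_eq_integral_sin_mul_sin hint heven hper,
      integral_sin_mul_sin_eq_integral_U_mul_U]
  rw [hentries, Matrix.det_smul, gram_eq_polyCoeffMatrix_mul_momentMatrix_mul_transpose
      (fun j : Fin n => U ℂ j) (n := n) (fun j => by simp) hmom, Matrix.det_mul, Matrix.det_mul,
    Matrix.det_transpose, det_polyCoeffMatrix_U, Fintype.card_fin, hankelDet_eq_det_momentMatrix,
    show (n : ℤ) ^ 2 = (n ^ 2 : ℕ) by push_cast; rfl, zpow_natCast,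
    ← pow_mul_prod_range_pow_sq, div_pow]
  ring
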